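/- For every integer n ≥ 1, the special 1-complex 𝒮_n (the graph on the self-dual vertices of the Bruhat–Tits building ℬ_n for PGSp_n(F), with edges given by incidence in ℬ_n) is connected. -/

import Mathlib

open Matrix

/-- Index type for the standard symplectic space of dimension `2n`. -/
abbrev SpIndex (n : ℕ) := Fin n ⊕ Fin n

/-- The standard symplectic space `V = F^{2n}`. -/
abbrev SymplVec (F : Type) (n : ℕ) := SpIndex n → F

/-- The standard symplectic form `⟨v, w⟩ = ᵗv J_n w` on `F^{2n}`. -/
noncomputable def symplForm (F : Type) [Field F] (n : ℕ)
    (v w : SymplVec F n) : F :=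
  dotProduct v ((Matrix.J (Fin n) F).mulVec w)

section Lattices

variable (F : Type) [Field F] (O : Type) [CommRing O] [IsDomain O]
  [Algebra O F] [IsFractionRing O F] [IsDiscreteValuationRing O] (n : ℕ)

/-- Scaling of an `O`-submodule of `V` by an element `c ∈ F`. -/
noncomputable def smulLat (c : F) (L : Submodule O (SymplVec F n)) :
    Submodule O (SymplVec F n) :=
  L.map ((LinearMap.lsmul F (SymplVec F n) c).restrictScalars O)

/-- A lattice in `V = F^{2n}`: a free `O`-submodule of rank `2n` spanning `V`
over `F`. -/
def IsLattice (L : Submodule O (SymplVec F n)) : Prop :=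
  Nonempty (Module.Basis (SpIndex n) O L) ∧
    Submodule.span F (L : Set (SymplVec F n)) = ⊤

/-- The dual lattice `Λ* = {v ∈ V : ⟨v, w⟩ ∈ O for all w ∈ Λ}`. -/
noncomputable def dualLat (L : Submodule O (SymplVec F n)) :
    Submodule O (SymplVec F n) where
  carrier := {v | ∀ w ∈ L, symplForm F n v w ∈ (algebraMap O F).range}
  zero_mem' := by
    intro w hw
    simp only [symplForm, zero_dotProduct]
    exact ⟨0, map_zero _⟩
  add_mem' := by
    intro a b ha hb w hw
    simp only [symplForm, add_dotProduct]
    exact Subring.add_mem _ (ha w hw) (hb w hw)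
  smul_mem' := by
    intro c a ha w hw
    have h : symplForm F n (c • a) w = algebraMap O F c * symplForm F n a w := by
      simp only [symplForm]
      rw [smul_dotProduct, Algebra.smul_def]
    rw [h]
    obtain ⟨d, hd⟩ := ha w hw
    exact ⟨c * d, by rw [_root_.map_mul, hd]⟩

/-- `Λ` is a primitive lattice: `⟨Λ,Λ⟩ ⊆ O` and the induced alternating form
on `Λ/ϖΛ` over the residue field is non-degenerate (its radical is `ϖΛ`). -/
def IsPrimitive (ϖ : O) (L : Submodule O (SymplVec F n)) : Prop :=
  IsLattice F O n L ∧
    (∀ v ∈ L, ∀ w ∈ L, symplForm F n v w ∈ (algebraMap O F).range) ∧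
    (∀ v ∈ L, (∀ w ∈ L, ∃ a : O, symplForm F n v w = algebraMap O F (ϖ * a)) →
      v ∈ smulLat F O n (algebraMap O F ϖ) L)

/-- `Λ` represents a vertex of the Bruhat–Tits building `ℬ_n` of
`PGSp_n(F)`: there is a primitive lattice `Λ₀` with `ϖΛ₀ ⊆ Λ ⊆ Λ₀` and
`⟨Λ,Λ⟩ ⊆ ϖO`. -/
def IsBuildingVertex (ϖ : O) (L : Submodule O (SymplVec F n)) : Prop :=
  IsLattice F O n L ∧
    ∃ L₀ : Submodule O (SymplVec F n), IsPrimitive F O n ϖ L₀ ∧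
      smulLat F O n (algebraMap O F ϖ) L₀ ≤ L ∧ L ≤ L₀ ∧
      (∀ v ∈ L, ∀ w ∈ L, ∃ a : O, symplForm F n v w = algebraMap O F (ϖ * a))

/-- The valuation `ord_ϖ : F → ℤ` (junk value `0` where undefined):
`ord_ϖ(x) = m` when `x = ϖ^m u` with `u ∈ O^×`. -/
noncomputable def ordW (ϖ : O) (x : F) : ℤ :=
  @dite _ (∃ m : ℤ, ∃ u : Oˣ, x = (algebraMap O F ϖ) ^ m * algebraMap O F u)
    (Classical.dec _) (fun h => h.choose) (fun _ => 0)

/-- `γ ∈ GL_{2n}(F)` carries the standard basis to an `O`-basis of `Λ`: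
the columns of `γ` form an `O`-basis of `Λ`. -/
def IsBasisMatrix (L : Submodule O (SymplVec F n))
    (γ : Matrix (SpIndex n) (SpIndex n) F) : Prop :=
  ∃ b : Module.Basis (SpIndex n) O L, ∀ j i, ((b j : SymplVec F n) i) = γ i j

end Lattices

section Special

variable (F : Type) [Field F] (O : Type) [CommRing O] [IsDomain O]
  [Algebra O F] [IsFractionRing O F] [IsDiscreteValuationRing O] (n : ℕ)

/-- `Λ` represents a special (self-dual) vertex of the building. -/
def IsSpecialVertex (ϖ : O) (L : Submodule O (SymplVec F n)) : Prop :=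
  IsBuildingVertex F O n ϖ L ∧ ∃ c : Fˣ, dualLat F O n L = smulLat F O n (c : F) L

/-- Two lattices represent incident (adjacent) vertices of the special
`1`-complex `𝒮_n`: up to homothety, `ϖ^{-1}Λ₁` is primitive and
`Λ₁ ⊆ Λ₂ ⊆ ϖ^{-1}Λ₁` (or the same with the roles of `Λ₁` and `Λ₂`
interchanged). -/
def SpecialAdjacent (ϖ : O) (L₁ L₂ : Submodule O (SymplVec F n)) : Prop :=
  ∃ c₁ c₂ : Fˣ,
    (IsPrimitive F O n ϖ
        (smulLat F O n (algebraMap O F ϖ)⁻¹ (smulLat F O n (c₁ : F) L₁)) ∧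
      smulLat F O n (c₁ : F) L₁ ≤ smulLat F O n (c₂ : F) L₂ ∧
      smulLat F O n (c₂ : F) L₂ ≤
        smulLat F O n (algebraMap O F ϖ)⁻¹ (smulLat F O n (c₁ : F) L₁)) ∨
    (IsPrimitive F O n ϖ
        (smulLat F O n (algebraMap O F ϖ)⁻¹ (smulLat F O n (c₂ : F) L₂)) ∧
      smulLat F O n (c₂ : F) L₂ ≤ smulLat F O n (c₁ : F) L₁ ∧
      smulLat F O n (c₁ : F) L₁ ≤
        smulLat F O n (algebraMap O F ϖ)⁻¹ (smulLat F O n (c₂ : F) L₂))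

/-- One step in the special `1`-complex: pass to a homothetic lattice or move
along an edge of `𝒮_n` (between special vertices). -/
def SpecialStep (ϖ : O) (L₁ L₂ : Submodule O (SymplVec F n)) : Prop :=
  IsSpecialVertex F O n ϖ L₂ ∧
    ((∃ c : Fˣ, L₂ = smulLat F O n (c : F) L₁) ∨ SpecialAdjacent F O n ϖ L₁ L₂)

end Special

/-!
STATEMENT 15: For every integer `n ≥ 1`, the special `1`-complex `𝒮_n` (the
graph on the self-dual vertices of the Bruhat–Tits building `ℬ_n` for
`PGSp_n(F)`, with edges given by incidence in `ℬ_n`) is connected: any two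
special vertices are joined by an edge path consisting of special vertices.
-/

section SpAux

variable {F : Type} [Field F] {O : Type} [CommRing O] [IsDomain O]
  [Algebra O F] [IsFractionRing O F] [IsDiscreteValuationRing O] {n : ℕ}

namespace SpAux
set_option linter.unusedSectionVars false

local notation "V" => SymplVec F n

lemma form_eval (v w : V) :
    symplForm F n v w =
      (∑ i, v (Sum.inl i) * (-(w (Sum.inr i)))) + ∑ i, v (Sum.inr i) * w (Sum.inl i) := by
  classical
  have hJ : (Matrix.J (Fin n) F).mulVec w =
      Sum.elim (fun i => -(w (Sum.inr i))) (fun i => w (Sum.inl i)) := by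
    funext x
    cases x with
    | inl i =>
        simp [Matrix.J, Matrix.mulVec, dotProduct, Matrix.fromBlocks,
          Fintype.sum_sum_type, Matrix.one_apply]
    | inr i =>
        simp [Matrix.J, Matrix.mulVec, dotProduct, Matrix.fromBlocks,
          Fintype.sum_sum_type, Matrix.one_apply]
  rw [symplForm, hJ]
  simp [dotProduct, Fintype.sum_sum_type]

lemma form_self (v : V) : symplForm F n v v = 0 := by
  rw [form_eval]
  simp [mul_comm]

lemma form_skew (v w : V) : symplForm F n v w = - symplForm F n w v := by
  rw [form_eval, form_eval, neg_add, ← Finset.sum_neg_distrib, ← Finset.sum_neg_distrib,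
    add_comm]
  congr 1 <;> exact Finset.sum_congr rfl (fun i _ => by ring)

lemma form_add_left (v v' w : V) :
    symplForm F n (v + v') w = symplForm F n v w + symplForm F n v' w := by
  simp [symplForm, add_dotProduct]

lemma form_add_right (v w w' : V) :
    symplForm F n v (w + w') = symplForm F n v w + symplForm F n v w' := by
  simp [symplForm, Matrix.mulVec_add, dotProduct_add]

lemma form_smul_left (c : F) (v w : V) :
    symplForm F n (c • v) w = c * symplForm F n v w := by
  simp [symplForm, smul_dotProduct, smul_eq_mul]

lemma form_smul_right (c : F) (v w : V) :
    symplForm F n v (c • w) = c * symplForm F n v w := by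
  simp [symplForm, Matrix.mulVec_smul, dotProduct_smul, smul_eq_mul]

lemma form_osmul_left (a : O) (v w : V) :
    symplForm F n (a • v) w = algebraMap O F a * symplForm F n v w := by
  rw [← algebraMap_smul F a v, form_smul_left]

lemma form_osmul_right (a : O) (v w : V) :
    symplForm F n v (a • w) = algebraMap O F a * symplForm F n v w := by
  rw [← algebraMap_smul F a w, form_smul_right]

end SpAux
end SpAux
namespace SpAux
section B
set_option linter.unusedSectionVars false
variable {F : Type} [Field F] {O : Type} [CommRing O] [IsDomain O]
  [Algebra O F] [IsFractionRing O F] [IsDiscreteValuationRing O] {n : ℕ}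

local notation "V" => SymplVec F n

lemma mem_smulLat {c : F} {L : Submodule O V} {v : V} :
    v ∈ smulLat F O n c L ↔ ∃ w ∈ L, c • w = v := by
  simp [smulLat, Submodule.mem_map]

lemma smul_mem_smulLat {c : F} {L : Submodule O V} {w : V} (hw : w ∈ L) :
    c • w ∈ smulLat F O n c L := mem_smulLat.2 ⟨w, hw, rfl⟩

lemma smulLat_smulLat (c d : F) (L : Submodule O V) :
    smulLat F O n c (smulLat F O n d L) = smulLat F O n (c * d) L := by
  ext v
  simp only [mem_smulLat]
  constructor
  · rintro ⟨w, ⟨u, hu, rfl⟩, rfl⟩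
    exact ⟨u, hu, (smul_smul c d u).symm ▸ rfl⟩
  · rintro ⟨u, hu, rfl⟩
    exact ⟨d • u, ⟨u, hu, rfl⟩, (smul_smul c d u)⟩

lemma smulLat_one (L : Submodule O V) : smulLat F O n 1 L = L := by
  ext v; simp [mem_smulLat]

lemma smulLat_mono (c : F) {L L' : Submodule O V} (h : L ≤ L') :
    smulLat F O n c L ≤ smulLat F O n c L' := by
  intro v hv
  obtain ⟨w, hw, rfl⟩ := mem_smulLat.1 hv
  exact smul_mem_smulLat (h hw)

lemma smulLat_inv_smulLat {c : F} (hc : c ≠ 0) (L : Submodule O V) :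
    smulLat F O n c⁻¹ (smulLat F O n c L) = L := by
  rw [smulLat_smulLat, inv_mul_cancel₀ hc, smulLat_one]

lemma smulLat_smulLat_inv {c : F} (hc : c ≠ 0) (L : Submodule O V) :
    smulLat F O n c (smulLat F O n c⁻¹ L) = L := by
  rw [smulLat_smulLat, mul_inv_cancel₀ hc, smulLat_one]

lemma mem_smulLat_iff {c : F} (hc : c ≠ 0) {L : Submodule O V} {v : V} :
    v ∈ smulLat F O n c L ↔ c⁻¹ • v ∈ L := by
  rw [mem_smulLat]
  constructor
  · rintro ⟨w, hw, rfl⟩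
    rwa [smul_smul, inv_mul_cancel₀ hc, one_smul]
  · intro h
    exact ⟨c⁻¹ • v, h, by rw [smul_smul, mul_inv_cancel₀ hc, one_smul]⟩

lemma smulLat_le_iff {c : F} (hc : c ≠ 0) {L L' : Submodule O V} :
    smulLat F O n c L ≤ L' ↔ L ≤ smulLat F O n c⁻¹ L' := by
  constructor
  · intro h
    rw [← smulLat_inv_smulLat hc L]
    exact smulLat_mono _ h
  · intro h
    rw [← smulLat_smulLat_inv hc L']
    exact smulLat_mono _ h

/-- `ϖ L ≤ L`. -/
lemma smulLat_algebraMap_le (a : O) (L : Submodule O V) :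
    smulLat F O n (algebraMap O F a) L ≤ L := by
  intro v hv
  obtain ⟨w, hw, rfl⟩ := mem_smulLat.1 hv
  rw [algebraMap_smul]
  exact L.smul_mem a hw

lemma mem_dualLat {L : Submodule O V} {v : V} :
    v ∈ dualLat F O n L ↔ ∀ w ∈ L, symplForm F n v w ∈ (algebraMap O F).range :=
  Iff.rfl

lemma dualLat_anti {L L' : Submodule O V} (h : L ≤ L') :
    dualLat F O n L' ≤ dualLat F O n L :=
  fun _ hv w hw => hv w (h hw)

lemma dualLat_smulLat {c : F} (hc : c ≠ 0) (L : Submodule O V) :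
    dualLat F O n (smulLat F O n c L) = smulLat F O n c⁻¹ (dualLat F O n L) := by
  ext v
  rw [mem_smulLat_iff (inv_ne_zero hc), inv_inv, mem_dualLat, mem_dualLat]
  constructor
  · intro h w hw
    have := h (c • w) (smul_mem_smulLat hw)
    rwa [form_smul_right, ← form_smul_left] at this
  · intro h w hw
    obtain ⟨u, hu, rfl⟩ := mem_smulLat.1 hw
    rw [form_smul_right, ← form_smul_left]
    exact h u hu

/-- Pairing of two submodules lands in `O`. -/
def PairO (L₁ L₂ : Submodule O V) : Prop :=
  ∀ v ∈ L₁, ∀ w ∈ L₂, symplForm F n v w ∈ (algebraMap O F).range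

/-- Pairing of two submodules lands in `ϖ O`. -/
def PairW (ϖ : O) (L₁ L₂ : Submodule O V) : Prop :=
  ∀ v ∈ L₁, ∀ w ∈ L₂, ∃ a : O, symplForm F n v w = algebraMap O F (ϖ * a)

lemma PairW.pairO {ϖ : O} {L₁ L₂ : Submodule O V} (h : PairW ϖ L₁ L₂) :
    PairO L₁ L₂ := fun v hv w hw => by
  obtain ⟨a, ha⟩ := h v hv w hw
  exact ⟨ϖ * a, ha.symm⟩

lemma PairO.mono {L₁ L₂ L₁' L₂' : Submodule O V} (h : PairO L₁ L₂)
    (h₁ : L₁' ≤ L₁) (h₂ : L₂' ≤ L₂) : PairO L₁' L₂' :=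
  fun v hv w hw => h v (h₁ hv) w (h₂ hw)

lemma PairW.mono {ϖ : O} {L₁ L₂ L₁' L₂' : Submodule O V} (h : PairW ϖ L₁ L₂)
    (h₁ : L₁' ≤ L₁) (h₂ : L₂' ≤ L₂) : PairW ϖ L₁' L₂' :=
  fun v hv w hw => h v (h₁ hv) w (h₂ hw)

lemma PairO.symm {L₁ L₂ : Submodule O V} (h : PairO L₁ L₂) : PairO L₂ L₁ := by
  intro v hv w hw
  obtain ⟨a, ha⟩ := h w hw v hv
  exact ⟨-a, by rw [map_neg, ha, ← form_skew]⟩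

lemma PairW.symm {ϖ : O} {L₁ L₂ : Submodule O V} (h : PairW ϖ L₁ L₂) :
    PairW ϖ L₂ L₁ := by
  intro v hv w hw
  obtain ⟨a, ha⟩ := h w hw v hv
  exact ⟨-a, by rw [form_skew, ha, ← map_neg]; ring_nf⟩

lemma PairO.sup_left {L₁ L₂ L₃ : Submodule O V} (h₁ : PairO L₁ L₃)
    (h₂ : PairO L₂ L₃) : PairO (L₁ ⊔ L₂) L₃ := by
  intro v hv w hw
  obtain ⟨a, ha, b, hb, rfl⟩ := Submodule.mem_sup.1 hv
  rw [form_add_left]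
  exact Subring.add_mem _ (h₁ a ha w hw) (h₂ b hb w hw)

lemma PairW.sup_left {ϖ : O} {L₁ L₂ L₃ : Submodule O V} (h₁ : PairW ϖ L₁ L₃)
    (h₂ : PairW ϖ L₂ L₃) : PairW ϖ (L₁ ⊔ L₂) L₃ := by
  intro v hv w hw
  obtain ⟨a, ha, b, hb, rfl⟩ := Submodule.mem_sup.1 hv
  obtain ⟨x, hx⟩ := h₁ a ha w hw
  obtain ⟨y, hy⟩ := h₂ b hb w hw
  exact ⟨x + y, by rw [form_add_left, hx, hy, ← map_add]; ring_nf⟩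

lemma PairO.sup_right {L₁ L₂ L₃ : Submodule O V} (h₁ : PairO L₁ L₂)
    (h₂ : PairO L₁ L₃) : PairO L₁ (L₂ ⊔ L₃) :=
  (PairO.sup_left h₁.symm h₂.symm).symm

lemma PairW.sup_right {ϖ : O} {L₁ L₂ L₃ : Submodule O V} (h₁ : PairW ϖ L₁ L₂)
    (h₂ : PairW ϖ L₁ L₃) : PairW ϖ L₁ (L₂ ⊔ L₃) :=
  (PairW.sup_left h₁.symm h₂.symm).symm

/-- scaling one side by `ϖ` upgrades `O`-pairing to `ϖO`-pairing. -/
lemma PairO.smul_left {ϖ : O} {L₁ L₂ : Submodule O V} (h : PairO L₁ L₂) :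
    PairW ϖ (smulLat F O n (algebraMap O F ϖ) L₁) L₂ := by
  intro v hv w hw
  obtain ⟨u, hu, rfl⟩ := mem_smulLat.1 hv
  obtain ⟨a, ha⟩ := h u hu w hw
  exact ⟨a, by rw [_root_.map_mul, ha, form_smul_left]⟩

/-- descaling one side by `ϖ` downgrades `ϖO`-pairing to `O`-pairing. -/
lemma PairW.smul_inv_right {ϖ : O} {L₁ L₂ : Submodule O V} (h : PairW ϖ L₁ L₂)
    (hW : (algebraMap O F ϖ) ≠ 0) :
    PairO L₁ (smulLat F O n (algebraMap O F ϖ)⁻¹ L₂) := by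
  intro v hv w hw
  obtain ⟨u, hu, rfl⟩ := mem_smulLat.1 hw
  obtain ⟨a, ha⟩ := h v hv u hu
  refine ⟨a, ?_⟩
  rw [form_smul_right, ha, _root_.map_mul, inv_mul_cancel_left₀ hW]

end B
end SpAux
namespace SpAux
section C
set_option linter.unusedSectionVars false
set_option maxHeartbeats 1000000
variable {F : Type} [Field F] {O : Type} [CommRing O] [IsDomain O]
  [Algebra O F] [IsFractionRing O F] [IsDiscreteValuationRing O] {n : ℕ}

local notation "V" => SymplVec F n

lemma span_F_eq_top_of_le {L L' : Submodule O V} (h : L ≤ L')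
    (hL : Submodule.span F (L : Set V) = ⊤) :
    Submodule.span F (L' : Set V) = ⊤ :=
  top_le_iff.1 (hL ▸ Submodule.span_mono h)

lemma span_F_smulLat {c : F} (hc : c ≠ 0) {L : Submodule O V}
    (hL : Submodule.span F (L : Set V) = ⊤) :
    Submodule.span F ((smulLat F O n c L : Submodule O V) : Set V) = ⊤ := by
  rw [eq_top_iff, ← hL]
  rw [Submodule.span_le]
  intro v hv
  have h1 : c • v ∈ smulLat F O n c L := smul_mem_smulLat hv
  have : v = c⁻¹ • (c • v) := by rw [smul_smul, inv_mul_cancel₀ hc, one_smul]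
  rw [this]
  exact Submodule.smul_mem _ _ (Submodule.subset_span h1)

lemma isLattice_smulLat {c : F} (hc : c ≠ 0) {M : Submodule O V}
    (hM : IsLattice F O n M) : IsLattice F O n (smulLat F O n c M) := by
  obtain ⟨⟨b⟩, hspan⟩ := hM
  refine ⟨⟨?_⟩, span_F_smulLat hc hspan⟩
  have hinj : Function.Injective
      ((LinearMap.lsmul F V c).restrictScalars O) := by
    intro x y hxy
    exact smul_right_injective V hc hxy
  exact b.map (Submodule.equivMapOfInjective _ hinj M)

/-- An `O`-submodule squeezed between a lattice and its `c`-multiple is a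
lattice. -/
lemma isLattice_sandwich {c : F} (hc : c ≠ 0) {M X : Submodule O V}
    (hM : IsLattice F O n M) (h1 : smulLat F O n c M ≤ X) (h2 : X ≤ M) :
    IsLattice F O n X := by
  classical
  obtain ⟨⟨b⟩, hspan⟩ := hM
  have hXspan : Submodule.span F (X : Set V) = ⊤ :=
    span_F_eq_top_of_le h1 (span_F_smulLat hc hspan)
  refine ⟨?_, hXspan⟩
  -- basis of X via PID theory
  obtain ⟨m, e⟩ := Submodule.basisOfPid b (X.comap M.subtype)
  let e' : Module.Basis (Fin m) O X := e.map (Submodule.comapSubtypeEquivOfLe h2)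
  -- upper bound : m ≤ card (SpIndex n)
  have hVli : LinearIndependent O (fun i => ((e' i : V))) := by
    have := e'.linearIndependent
    exact this.map' X.subtype (Submodule.ker_subtype X)
  have hFli : LinearIndependent F (fun i => ((e' i : V))) :=
    LinearIndependent.localization F (nonZeroDivisors O) hVli
  have hub : m ≤ Fintype.card (SpIndex n) := by
    have := Module.Basis.card_le_card_of_linearIndependent (Pi.basisFun F (SpIndex n)) hFli
    simpa using this
  -- lower bound
  have hlb : Fintype.card (SpIndex n) ≤ m := by
    have hmem : ∀ i : SpIndex n, c • (b i : V) ∈ X := fun i =>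
      h1 (smul_mem_smulLat (b i).2)
    have hli0 : LinearIndependent O (fun i : SpIndex n => (b i : V)) :=
      b.linearIndependent.map' M.subtype (Submodule.ker_subtype M)
    have hli1 : LinearIndependent O (fun i : SpIndex n => c • (b i : V)) := by
      have := hli0.map' ((LinearMap.lsmul F V c).restrictScalars O)
        (LinearMap.ker_eq_bot.2 (fun x y hxy => smul_right_injective V hc hxy))
      exact this
    have hli2 : LinearIndependent O
        (fun i : SpIndex n => (⟨c • (b i : V), hmem i⟩ : X)) := by
      apply LinearIndependent.of_comp X.subtype
      exact hli1
    have := Module.Basis.card_le_card_of_linearIndependent e' hli2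
    simpa using this
  have hm : m = Fintype.card (SpIndex n) := le_antisymm hub hlb
  exact ⟨e'.reindex (Fintype.equivOfCardEq (by simpa using hm))⟩

/-- clearing denominators pointwise. -/
lemma exists_pow_mul_mem_range (ϖ : O) (hϖ : Irreducible ϖ) (c : F) :
    ∃ (s : ℕ) (a : O), (algebraMap O F ϖ) ^ s * c = algebraMap O F a := by
  obtain ⟨x, y, hy, hxy⟩ := IsFractionRing.div_surjective (A := O) c
  by_cases hy0 : y = 0
  · exact absurd hy0 (nonZeroDivisors.ne_zero hy)
  obtain ⟨s, u, rfl⟩ := IsDiscreteValuationRing.eq_unit_mul_pow_irreducible hy0 hϖ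
  refine ⟨s, x * ↑u⁻¹, ?_⟩
  have hu : (algebraMap O F) (↑u : O) ≠ 0 := by
    simpa using (IsFractionRing.to_map_eq_zero_iff (K := F)).not.2 (Units.ne_zero u)
  have hW : (algebraMap O F ϖ) ≠ 0 := by
    simpa using (IsFractionRing.to_map_eq_zero_iff (K := F)).not.2 hϖ.ne_zero
  have hY : algebraMap O F (↑u * ϖ ^ s) ≠ 0 := by
    simpa using (IsFractionRing.to_map_eq_zero_iff (K := F)).not.2 hy0
  have key : (x * ↑u⁻¹) * (↑u * ϖ ^ s) = x * ϖ ^ s := by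
    have huu : (↑u⁻¹ : O) * ↑u = 1 := Units.inv_mul u
    calc (x * ↑u⁻¹) * (↑u * ϖ ^ s) = x * ((↑u⁻¹ * ↑u) * ϖ ^ s) := by ring
    _ = x * ϖ ^ s := by rw [huu, one_mul]
  rw [← hxy, ← mul_div_assoc, eq_comm, eq_div_iff hY, ← map_pow, ← _root_.map_mul,
    ← _root_.map_mul, key]
  congr 1
  ring

lemma exists_pow_smul_mem (ϖ : O) (hϖ : Irreducible ϖ) {M : Submodule O V}
    (hspan : Submodule.span F (M : Set V) = ⊤) (v : V) :
    ∃ j : ℕ, ((algebraMap O F ϖ) ^ j) • v ∈ M := by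
  have hv : v ∈ Submodule.span F (M : Set V) := hspan ▸ Submodule.mem_top
  -- stability under multiplying by more powers
  have hstab : ∀ (j t : ℕ) (x : V), ((algebraMap O F ϖ) ^ j) • x ∈ M →
      ((algebraMap O F ϖ) ^ (j + t)) • x ∈ M := by
    intro j t x hx
    rw [pow_add, mul_comm, mul_smul, ← map_pow, algebraMap_smul]
    exact M.smul_mem _ hx
  induction hv using Submodule.span_induction with
  | mem x hx => exact ⟨0, by simpa using hx⟩
  | zero => exact ⟨0, by simp⟩
  | add x y _ _ hx hy =>
      obtain ⟨j₁, h₁⟩ := hx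
      obtain ⟨j₂, h₂⟩ := hy
      refine ⟨max j₁ j₂, ?_⟩
      rw [smul_add]
      have e₁ : max j₁ j₂ = j₁ + (max j₁ j₂ - j₁) := by omega
      have e₂ : max j₁ j₂ = j₂ + (max j₁ j₂ - j₂) := by omega
      exact add_mem (e₁ ▸ hstab _ _ _ h₁) (e₂ ▸ hstab _ _ _ h₂)
  | smul c x _ hx =>
      obtain ⟨j, hj⟩ := hx
      obtain ⟨s, a, ha⟩ := exists_pow_mul_mem_range ϖ hϖ c
      refine ⟨s + j, ?_⟩
      have : ((algebraMap O F ϖ) ^ (s + j)) • (c • x)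
          = a • (((algebraMap O F ϖ) ^ j) • x) := by
        rw [← algebraMap_smul F a, smul_smul, smul_smul, ← ha, pow_add]
        congr 1
        ring
      rw [this]
      exact M.smul_mem _ hj

/-- clearing denominators for a whole lattice. -/
lemma exists_pow_smulLat_le (ϖ : O) (hϖ : Irreducible ϖ)
    {M N : Submodule O V} (hM : Submodule.span F (M : Set V) = ⊤)
    (hN : IsLattice F O n N) :
    ∃ j : ℕ, smulLat F O n ((algebraMap O F ϖ) ^ j) N ≤ M := by
  classical
  obtain ⟨⟨b⟩, -⟩ := hN
  choose jf hjf using fun i : SpIndex n =>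
    exists_pow_smul_mem ϖ hϖ hM (b i : V)
  refine ⟨Finset.univ.sup jf, ?_⟩
  -- the submodule of vectors v with ϖ^j • v ∈ M
  set j := Finset.univ.sup jf with hj
  set T : Submodule O V :=
    M.comap ((LinearMap.lsmul F V ((algebraMap O F ϖ) ^ j)).restrictScalars O)
    with hT
  have hTmem : ∀ v : V, v ∈ T ↔ ((algebraMap O F ϖ) ^ j) • v ∈ M := fun v =>
    Iff.rfl
  have hbT : ∀ i, (b i : V) ∈ T := by
    intro i
    rw [hTmem]
    have e : j = jf i + (j - jf i) := by
      have := Finset.le_sup (f := jf) (Finset.mem_univ i); omega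
    rw [e, pow_add, mul_comm, ← smul_smul, ← map_pow, algebraMap_smul]
    exact M.smul_mem _ (hjf i)
  have hNT : N ≤ T := by
    intro x hx
    have hrepr := b.sum_repr ⟨x, hx⟩
    have hre : x = ∑ i, (b.repr ⟨x, hx⟩ i) • (b i : V) := by
      have := congrArg (Subtype.val (p := (· ∈ N))) hrepr
      simpa only [Submodule.coe_sum, Submodule.coe_smul] using this.symm
    rw [hre]
    exact Submodule.sum_mem _ (fun i _ => Submodule.smul_mem _ _ (hbT i))
  intro v hv
  obtain ⟨w, hw, rfl⟩ := mem_smulLat.1 hv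
  exact (hTmem w).1 (hNT hw)

end C
end SpAux
namespace SpAux
section D
set_option linter.unusedSectionVars false
set_option maxHeartbeats 1000000
variable {F : Type} [Field F] {O : Type} [CommRing O] [IsDomain O]
  [Algebra O F] [IsFractionRing O F] [IsDiscreteValuationRing O] {n : ℕ}

local notation "V" => SymplVec F n

/-- Zorn: maximal submodule between `X₀` and `Y` satisfying a pairwise
pairing condition. -/
lemma exists_maximal_pair (X₀ Y : Submodule O V) (T : Set F)
    (hX₀Y : X₀ ≤ Y) (hX₀ : ∀ v ∈ X₀, ∀ w ∈ X₀, symplForm F n v w ∈ T) :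
    ∃ M, X₀ ≤ M ∧ Maximal
      (fun X => X₀ ≤ X ∧ X ≤ Y ∧ ∀ v ∈ X, ∀ w ∈ X, symplForm F n v w ∈ T) M := by
  set S : Set (Submodule O V) :=
    {X | X₀ ≤ X ∧ X ≤ Y ∧ ∀ v ∈ X, ∀ w ∈ X, symplForm F n v w ∈ T} with hS
  have h := zorn_le_nonempty₀ S ?_ X₀ ⟨le_refl _, hX₀Y, hX₀⟩
  · obtain ⟨m, hm1, hm2⟩ := h
    exact ⟨m, hm1, hm2⟩
  · intro c hcS hchain y hy
    refine ⟨sSup c, ⟨?_, ?_, ?_⟩, fun z hz => le_sSup hz⟩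
    · exact le_trans (hcS hy).1 (le_sSup hy)
    · exact sSup_le (fun z hz => (hcS hz).2.1)
    · intro v hv w hw
      obtain ⟨A, hA, hvA⟩ := (Submodule.mem_sSup_of_directed ⟨y, hy⟩
        (hchain.directedOn)).1 hv
      obtain ⟨B, hB, hwB⟩ := (Submodule.mem_sSup_of_directed ⟨y, hy⟩
        (hchain.directedOn)).1 hw
      rcases hchain.total hA hB with h | h
      · exact (hcS hB).2.2 v (h hvA) w hwB
      · exact (hcS hA).2.2 v hvA w (h hwB)

variable (ϖ : O) (hϖ : Irreducible ϖ)

lemma W_ne_zero (hϖ : Irreducible ϖ) : (algebraMap O F ϖ) ≠ 0 := by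
  simpa using (IsFractionRing.to_map_eq_zero_iff (K := F)).not.2 hϖ.ne_zero

/-- A self-dual lattice is primitive. -/
lemma isPrimitive_of_selfdual {M : Submodule O V} (hϖ : Irreducible ϖ)
    (hM : IsLattice F O n M) (hd : dualLat F O n M = M) :
    IsPrimitive F O n ϖ M := by
  have hW : (algebraMap O F ϖ) ≠ 0 := W_ne_zero ϖ hϖ
  refine ⟨hM, ?_, ?_⟩
  · intro v hv w hw
    rw [← hd] at hv
    exact hv w hw
  · intro v hv h
    have hmem : (algebraMap O F ϖ)⁻¹ • v ∈ dualLat F O n M := by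
      intro w hw
      obtain ⟨a, ha⟩ := h w hw
      refine ⟨a, ?_⟩
      rw [form_smul_left, ha, _root_.map_mul, inv_mul_cancel_left₀ hW]
    rw [hd] at hmem
    rw [mem_smulLat_iff hW]
    exact hmem

/-- A primitive lattice is self-dual. -/
lemma selfdual_of_isPrimitive {M : Submodule O V} (hϖ : Irreducible ϖ)
    (h : IsPrimitive F O n ϖ M) : dualLat F O n M = M := by
  classical
  have hW : (algebraMap O F ϖ) ≠ 0 := W_ne_zero ϖ hϖ
  obtain ⟨⟨hb, hspan⟩, hint, hrad⟩ := h
  apply le_antisymm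
  · intro v hv
    have hex : ∃ j : ℕ, ((algebraMap O F ϖ) ^ j) • v ∈ M :=
      exists_pow_smul_mem ϖ hϖ hspan v
    let j₀ := Nat.find hex
    have hj₀ : ((algebraMap O F ϖ) ^ j₀) • v ∈ M := Nat.find_spec hex
    by_cases h0 : j₀ = 0
    · rw [h0] at hj₀; simpa using hj₀
    · exfalso
      have hu : ∀ w ∈ M, ∃ a : O,
          symplForm F n (((algebraMap O F ϖ) ^ j₀) • v) w
            = algebraMap O F (ϖ * a) := by
        intro w hw
        obtain ⟨b, hbv⟩ := hv w hw
        refine ⟨ϖ ^ (j₀ - 1) * b, ?_⟩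
        rw [form_smul_left, ← hbv, _root_.map_mul, _root_.map_mul, map_pow,
          ← mul_assoc, ← pow_succ']
        congr 2
        omega
      have := hrad _ hj₀ hu
      obtain ⟨w, hw, hwe⟩ := mem_smulLat.1 this
      have : ((algebraMap O F ϖ) ^ (j₀ - 1)) • v ∈ M := by
        have hcalc : ((algebraMap O F ϖ) ^ (j₀ - 1)) • v = w := by
          apply smul_right_injective V hW
          show (algebraMap O F ϖ) • ((algebraMap O F ϖ) ^ (j₀ - 1)) • v
            = (algebraMap O F ϖ) • w
          rw [hwe, smul_smul, ← pow_succ']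
          congr 2
          omega
        rw [hcalc]; exact hw
      exact Nat.find_min hex (by omega) this
  · intro v hv w hw
    exact hint v hv w hw

end D
end SpAux
namespace SpAux
section E
set_option linter.unusedSectionVars false
set_option maxHeartbeats 1000000
variable {F : Type} [Field F] {O : Type} [CommRing O] [IsDomain O]
  [Algebra O F] [IsFractionRing O F] [IsDiscreteValuationRing O] {n : ℕ}
  {ϖ : O}

local notation "V" => SymplVec F n
local notation "W" => algebraMap O F ϖ

lemma pairW_smul_right {A B : Submodule O V} (h : PairO A B) :
    PairW ϖ A (smulLat F O n W B) := (PairO.smul_left h.symm).symm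

lemma pairW_self_of_selfdual {M : Submodule O V} (hd : dualLat F O n M = M) :
    PairW ϖ (smulLat F O n W M) (smulLat F O n W M) := by
  have hOO : PairO M M := by
    intro v hv w hw
    rw [← hd] at hv
    exact hv w hw
  exact pairW_smul_right (PairO.smul_left hOO).pairO

lemma isSpecialVertex_smul_selfdual (hϖ : Irreducible ϖ) {M : Submodule O V}
    (hM : IsLattice F O n M) (hd : dualLat F O n M = M) :
    IsSpecialVertex F O n ϖ (smulLat F O n W M) := by
  have hW : (W : F) ≠ 0 := W_ne_zero ϖ hϖ
  constructor
  · refine ⟨isLattice_smulLat hW hM, M, isPrimitive_of_selfdual ϖ hϖ hM hd,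
      le_refl _, smulLat_algebraMap_le ϖ M, ?_⟩
    exact pairW_self_of_selfdual hd
  · refine ⟨Units.mk0 (W⁻¹ * W⁻¹) (by simp [hW]), ?_⟩
    rw [dualLat_smulLat hW, hd]
    show smulLat F O n W⁻¹ M = smulLat F O n (W⁻¹ * W⁻¹) (smulLat F O n W M)
    rw [smulLat_smulLat]
    congr 1
    field_simp

lemma isSpecialVertex_mid (hϖ : Irreducible ϖ) {Λ M : Submodule O V}
    (hlat : IsLattice F O n Λ) (hdual : dualLat F O n Λ = smulLat F O n W⁻¹ Λ)
    (hpair : PairW ϖ Λ Λ) (hMp : IsPrimitive F O n ϖ M)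
    (h1 : smulLat F O n W M ≤ Λ) (h2 : Λ ≤ M) :
    IsSpecialVertex F O n ϖ Λ := by
  have hW : (W : F) ≠ 0 := W_ne_zero ϖ hϖ
  exact ⟨⟨hlat, M, hMp, h1, h2, hpair⟩,
    ⟨Units.mk0 W⁻¹ (inv_ne_zero hW), hdual⟩⟩

/-- step from `ϖM` (M self-dual) down to a special `Λ` with `ϖM ≤ Λ ≤ M`. -/
lemma step_down (hϖ : Irreducible ϖ) {M Λ : Submodule O V}
    (hMp : IsPrimitive F O n ϖ M) (hΛ : IsSpecialVertex F O n ϖ Λ)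
    (h1 : smulLat F O n W M ≤ Λ) (h2 : Λ ≤ M) :
    SpecialStep F O n ϖ (smulLat F O n W M) Λ := by
  have hW : (W : F) ≠ 0 := W_ne_zero ϖ hϖ
  refine ⟨hΛ, Or.inr ⟨1, 1, Or.inl ⟨?_, ?_, ?_⟩⟩⟩
  · simp only [Units.val_one, smulLat_one]
    rw [smulLat_inv_smulLat hW]
    exact hMp
  · simp only [Units.val_one, smulLat_one]
    exact h1
  · simp only [Units.val_one, smulLat_one]
    rw [smulLat_inv_smulLat hW]
    exact h2

/-- step from a special `Λ` up to `ϖM` where `M` self-dual, `ϖM ≤ Λ ≤ M`. -/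
lemma step_up (hϖ : Irreducible ϖ) {Λ M : Submodule O V}
    (hMp : IsPrimitive F O n ϖ M)
    (hMs : IsSpecialVertex F O n ϖ (smulLat F O n W M))
    (h1 : smulLat F O n W M ≤ Λ) (h2 : Λ ≤ M) :
    SpecialStep F O n ϖ Λ (smulLat F O n W M) := by
  have hW : (W : F) ≠ 0 := W_ne_zero ϖ hϖ
  refine ⟨hMs, Or.inr ⟨1, 1, Or.inr ⟨?_, ?_, ?_⟩⟩⟩
  · simp only [Units.val_one, smulLat_one]
    rw [smulLat_inv_smulLat hW]
    exact hMp
  · simp only [Units.val_one, smulLat_one]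
    exact h1
  · simp only [Units.val_one, smulLat_one]
    rw [smulLat_inv_smulLat hW]
    exact h2

end E
end SpAux
namespace SpAux
section G
set_option linter.unusedSectionVars false
set_option maxHeartbeats 1000000
variable {F : Type} [Field F] {O : Type} [CommRing O] [IsDomain O]
  [Algebra O F] [IsFractionRing O F] [IsDiscreteValuationRing O] {n : ℕ}
  {ϖ : O}

local notation "V" => SymplVec F n
local notation "W" => algebraMap O F ϖ

lemma PairO.smul_pow {A B : Submodule O V} (h : PairO A B) (i j : ℕ) :
    PairO (smulLat F O n (W ^ i) A) (smulLat F O n (W ^ j) B) := by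
  intro v hv w hw
  obtain ⟨a, ha, rfl⟩ := mem_smulLat.1 hv
  obtain ⟨b, hb, rfl⟩ := mem_smulLat.1 hw
  obtain ⟨c, hc⟩ := h a ha b hb
  refine ⟨ϖ ^ (i + j) * c, ?_⟩
  rw [form_smul_left, form_smul_right, _root_.map_mul, map_pow, hc, pow_add]
  ring

lemma pairW_span_right {A : Submodule O V} {u : V}
    (h : ∀ v ∈ A, ∃ a : O, symplForm F n v u = algebraMap O F (ϖ * a)) :
    PairW ϖ A (Submodule.span O {u}) := by
  intro v hv w hw
  obtain ⟨a, rfl⟩ := Submodule.mem_span_singleton.1 hw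
  obtain ⟨c, hc⟩ := h v hv
  refine ⟨a * c, ?_⟩
  rw [form_osmul_right, hc, ← _root_.map_mul]
  congr 1
  ring

lemma pairO_span_right {A : Submodule O V} {u : V}
    (h : ∀ v ∈ A, symplForm F n v u ∈ (algebraMap O F).range) :
    PairO A (Submodule.span O {u}) := by
  intro v hv w hw
  obtain ⟨a, rfl⟩ := Submodule.mem_span_singleton.1 hw
  obtain ⟨c, hc⟩ := h v hv
  exact ⟨a * c, by rw [form_osmul_right, ← hc, _root_.map_mul]⟩

lemma pairW_span_span (u : V) :
    PairW ϖ (Submodule.span O {u} : Submodule O V) (Submodule.span O {u}) := by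
  intro v hv w hw
  obtain ⟨a, rfl⟩ := Submodule.mem_span_singleton.1 hv
  obtain ⟨b, rfl⟩ := Submodule.mem_span_singleton.1 hw
  refine ⟨0, ?_⟩
  rw [form_osmul_right, form_osmul_left, form_self]
  simp

lemma pairO_span_span (u : V) :
    PairO (Submodule.span O {u} : Submodule O V) (Submodule.span O {u}) := by
  intro v hv w hw
  obtain ⟨a, rfl⟩ := Submodule.mem_span_singleton.1 hv
  obtain ⟨b, rfl⟩ := Submodule.mem_span_singleton.1 hw
  refine ⟨0, ?_⟩
  rw [map_zero, form_osmul_right, form_osmul_left, form_self]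
  simp

lemma walk (hϖ : Irreducible ϖ) (k : ℕ) :
    ∀ (M M' : Submodule O V), IsLattice F O n M → dualLat F O n M = M →
      IsLattice F O n M' → dualLat F O n M' = M' →
      smulLat F O n (W ^ k) M' ≤ M →
      Relation.ReflTransGen (SpecialStep F O n ϖ)
        (smulLat F O n W M) (smulLat F O n W M') := by
  have hW : (W : F) ≠ 0 := W_ne_zero ϖ hϖ
  induction k with
  | zero =>
      intro M M' hM hd hM' hd' hle
      rw [pow_zero, smulLat_one] at hle
      have hge : M ≤ M' := by
        rw [← hd, ← hd']
        exact dualLat_anti hle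
      rw [le_antisymm hle hge]
  | succ k ih =>
      intro M M' hM hd hM' hd' hle
      have hOO : PairO M M := by
        intro v hv w hw; rw [← hd] at hv; exact hv w hw
      have hO'O' : PairO M' M' := by
        intro v hv w hw; rw [← hd'] at hv; exact hv w hw
      -- Stage 1: the middle special lattice Λ
      set X₀ : Submodule O V :=
        smulLat F O n W M ⊔ smulLat F O n (W ^ (k+1)) M' with hX₀
      have hX₀M : X₀ ≤ M :=
        sup_le (smulLat_algebraMap_le ϖ M) hle
      have hsmW : smulLat F O n W (smulLat F O n (W ^ k) M')
          = smulLat F O n (W ^ (k+1)) M' := by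
        rw [smulLat_smulLat, ← pow_succ']
      have hPX₀ : PairW ϖ X₀ X₀ := by
        have p1 : PairW ϖ (smulLat F O n W M) (smulLat F O n W M) :=
          pairW_self_of_selfdual hd
        have p2 : PairW ϖ (smulLat F O n W M) (smulLat F O n (W ^ (k+1)) M') :=
          (PairO.smul_left (hOO.mono (le_refl _) hle))
        have p4 : PairW ϖ (smulLat F O n (W ^ (k+1)) M')
            (smulLat F O n (W ^ (k+1)) M') := by
          rw [← hsmW]
          exact PairO.smul_left (by rw [hsmW]; exact hO'O'.smul_pow k (k+1))
        exact PairW.sup_left (p1.sup_right p2) (p2.symm.sup_right p4)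
      obtain ⟨Λ, hX₀Λ, hΛmax⟩ := exists_maximal_pair X₀ M
        {x : F | ∃ a : O, x = algebraMap O F (ϖ * a)} hX₀M (hPX₀)
      obtain ⟨-, hΛM, hΛpair⟩ := hΛmax.1
      have hPΛ : PairW ϖ Λ Λ := hΛpair
      have hWMΛ : smulLat F O n W M ≤ Λ := le_trans le_sup_left hX₀Λ
      have hk1Λ : smulLat F O n (W ^ (k+1)) M' ≤ Λ := le_trans le_sup_right hX₀Λ
      -- duality of Λ
      have hdualΛ : dualLat F O n Λ = smulLat F O n W⁻¹ Λ := by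
        apply le_antisymm
        · intro v hv
          have hu : W • v ∈ M := by
            rw [← hd]
            intro x hx
            have hWx : W • x ∈ Λ := hWMΛ (smul_mem_smulLat hx)
            obtain ⟨c, hc⟩ := hv (W • x) hWx
            exact ⟨c, by rw [form_smul_left, ← form_smul_right, ← hc]⟩
          set u := W • v with hu'
          have hpu : ∀ w ∈ Λ, ∃ a : O, symplForm F n u w
              = algebraMap O F (ϖ * a) := by
            intro w hw
            obtain ⟨c, hc⟩ := hv w hw
            exact ⟨c, by rw [hu', form_smul_left, ← hc, _root_.map_mul]⟩
          set X : Submodule O V := Λ ⊔ Submodule.span O {u} with hX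
          have hXS : X₀ ≤ X ∧ X ≤ M ∧
              (∀ a ∈ X, ∀ b ∈ X, symplForm F n a b
                ∈ {x : F | ∃ a : O, x = algebraMap O F (ϖ * a)}) := by
            refine ⟨le_trans hX₀Λ le_sup_left,
              sup_le hΛM (Submodule.span_le.2 (by simpa using hu)), ?_⟩
            have q1 : PairW ϖ Λ (Submodule.span O {u}) := pairW_span_right
              (fun w hw => by
                obtain ⟨c, hc⟩ := hpu w hw
                refine ⟨-c, ?_⟩
                rw [form_skew, hc, ← _root_.map_neg]
                congr 1
                ring)
            have q2 : PairW ϖ (Submodule.span O {u}) (Submodule.span O {u}) :=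
              pairW_span_span u
            exact PairW.sup_left (hPΛ.sup_right q1) (q1.symm.sup_right q2)
          have hXΛ : X ≤ Λ := hΛmax.2 hXS le_sup_left
          have huΛ : u ∈ Λ := hXΛ (Submodule.mem_sup_right (Submodule.subset_span rfl))
          rw [mem_smulLat_iff (inv_ne_zero hW), inv_inv]
          exact huΛ
        · intro v hv
          obtain ⟨u, hu, rfl⟩ := mem_smulLat.1 hv
          intro w hw
          obtain ⟨a, ha⟩ := hPΛ u hu w hw
          refine ⟨a, ?_⟩
          rw [form_smul_left, ha, _root_.map_mul, inv_mul_cancel_left₀ hW]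
      -- Stage 2: the next self-dual lattice M₁
      have hΛY : Λ ≤ smulLat F O n W⁻¹ Λ :=
        (smulLat_le_iff hW).1 (smulLat_algebraMap_le ϖ Λ)
      have hkY : smulLat F O n (W ^ k) M' ≤ smulLat F O n W⁻¹ Λ := by
        have h2 := smulLat_mono (c := W⁻¹) hk1Λ
        rw [smulLat_smulLat] at h2
        have he : W⁻¹ * W ^ (k+1) = W ^ k := by
          rw [pow_succ', ← mul_assoc, inv_mul_cancel₀ hW, one_mul]
        rwa [he] at h2
      set X₁ : Submodule O V := Λ ⊔ smulLat F O n (W ^ k) M' with hX₁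
      have hX₁Y : X₁ ≤ smulLat F O n W⁻¹ Λ := sup_le hΛY hkY
      have hPX₁ : PairO X₁ X₁ := by
        have p1 : PairO Λ Λ := hPΛ.pairO
        have p2 : PairO Λ (smulLat F O n (W ^ k) M') :=
          (hPΛ.smul_inv_right hW).mono (le_refl _) hkY
        have p4 : PairO (smulLat F O n (W ^ k) M') (smulLat F O n (W ^ k) M') :=
          hO'O'.smul_pow k k
        exact PairO.sup_left (p1.sup_right p2) (p2.symm.sup_right p4)
      obtain ⟨M₁, hX₁M₁, hM₁max⟩ := exists_maximal_pair X₁ (smulLat F O n W⁻¹ Λ)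
        ((algebraMap O F).range : Set F) hX₁Y hPX₁
      obtain ⟨-, hM₁Y, hM₁pair⟩ := hM₁max.1
      have hPM₁ : PairO M₁ M₁ := hM₁pair
      have hΛM₁ : Λ ≤ M₁ := le_trans le_sup_left hX₁M₁
      have hkM₁ : smulLat F O n (W ^ k) M' ≤ M₁ := le_trans le_sup_right hX₁M₁
      have hdualM₁ : dualLat F O n M₁ = M₁ := by
        apply le_antisymm
        · intro v hv
          have hvY : v ∈ smulLat F O n W⁻¹ Λ := by
            rw [← hdualΛ]
            exact dualLat_anti hΛM₁ hv
          set X : Submodule O V := M₁ ⊔ Submodule.span O {v} with hX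
          have hXS : X₁ ≤ X ∧ X ≤ smulLat F O n W⁻¹ Λ ∧
              (∀ a ∈ X, ∀ b ∈ X, symplForm F n a b
                ∈ ((algebraMap O F).range : Set F)) := by
            refine ⟨le_trans hX₁M₁ le_sup_left,
              sup_le hM₁Y (Submodule.span_le.2 (by simpa using hvY)), ?_⟩
            have q1 : PairO M₁ (Submodule.span O {v}) := pairO_span_right
              (fun m hm => by
                obtain ⟨c, hc⟩ := hv m hm
                exact ⟨-c, by rw [map_neg, hc, ← form_skew]⟩)
            have q2 : PairO (Submodule.span O {v}) (Submodule.span O {v}) :=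
              pairO_span_span v
            exact PairO.sup_left (hPM₁.sup_right q1) (q1.symm.sup_right q2)
          exact (hM₁max.2 hXS le_sup_left)
            (Submodule.mem_sup_right (Submodule.subset_span rfl))
        · intro v hv w hw
          exact hPM₁ v hv w hw
      -- lattice structure
      have hlatΛ : IsLattice F O n Λ := isLattice_sandwich hW hM hWMΛ hΛM
      have hlatY : IsLattice F O n (smulLat F O n W⁻¹ Λ) :=
        isLattice_smulLat (inv_ne_zero hW) hlatΛ
      have hWY : smulLat F O n W (smulLat F O n W⁻¹ Λ) = Λ :=
        smulLat_smulLat_inv hW Λ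
      have hlatM₁ : IsLattice F O n M₁ :=
        isLattice_sandwich hW hlatY (by rw [hWY]; exact hΛM₁) hM₁Y
      -- the two steps
      have hmidS : IsSpecialVertex F O n ϖ Λ :=
        isSpecialVertex_mid hϖ hlatΛ hdualΛ hPΛ
          (isPrimitive_of_selfdual ϖ hϖ hM hd) hWMΛ hΛM
      have step1 : SpecialStep F O n ϖ (smulLat F O n W M) Λ :=
        step_down hϖ (isPrimitive_of_selfdual ϖ hϖ hM hd) hmidS hWMΛ hΛM
      have hWM₁Λ : smulLat F O n W M₁ ≤ Λ := by
        have h3 := smulLat_mono (c := W) hM₁Y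
        rwa [hWY] at h3
      have step2 : SpecialStep F O n ϖ Λ (smulLat F O n W M₁) :=
        step_up hϖ (isPrimitive_of_selfdual ϖ hϖ hlatM₁ hdualM₁)
          (isSpecialVertex_smul_selfdual hϖ hlatM₁ hdualM₁) hWM₁Λ hΛM₁
      exact Relation.ReflTransGen.head step1
        (Relation.ReflTransGen.head step2
          (ih M₁ M' hlatM₁ hdualM₁ hM' hd' hkM₁))

end G
end SpAux
theorem special_one_complex_connected (F : Type) [Field F] (O : Type)
    [CommRing O] [IsDomain O] [Algebra O F] [IsFractionRing O F]
    [IsDiscreteValuationRing O]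
    -- `F` is a non-archimedean local field: complete with finite residue field
    [UniformSpace F] [CompleteSpace F] [Finite (IsLocalRing.ResidueField O)]
    -- of characteristic different from 2
    (hchar : (2 : F) ≠ 0)
    (ϖ : O) (hϖ : Irreducible ϖ)
    (n : ℕ) (hn : 1 ≤ n)
    (L L' : Submodule O (SymplVec F n))
    (hL : IsSpecialVertex F O n ϖ L) (hL' : IsSpecialVertex F O n ϖ L') :
    Relation.ReflTransGen (SpecialStep F O n ϖ) L L' := by
  classical
  have hL'copy := hL'
  obtain ⟨⟨hLlat, L₀, hL₀p, hlow, hup, hpair⟩, hc⟩ := hL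
  obtain ⟨⟨hL'lat, L₀', hL₀p', hlow', hup', hpair'⟩, hc'⟩ := hL'
  have hd₀ : dualLat F O n L₀ = L₀ := SpAux.selfdual_of_isPrimitive ϖ hϖ hL₀p
  have hd₀' : dualLat F O n L₀' = L₀' := SpAux.selfdual_of_isPrimitive ϖ hϖ hL₀p'
  have hlat₀ : IsLattice F O n L₀ := hL₀p.1
  have hlat₀' : IsLattice F O n L₀' := hL₀p'.1
  obtain ⟨k, hk⟩ := SpAux.exists_pow_smulLat_le ϖ hϖ hlat₀.2 hlat₀'
  have walkpath := SpAux.walk hϖ k L₀ L₀' hlat₀ hd₀ hlat₀' hd₀' hk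
  have stepA : SpecialStep F O n ϖ L (smulLat F O n (algebraMap O F ϖ) L₀) :=
    SpAux.step_up hϖ hL₀p (SpAux.isSpecialVertex_smul_selfdual hϖ hlat₀ hd₀)
      hlow hup
  have stepB : SpecialStep F O n ϖ (smulLat F O n (algebraMap O F ϖ) L₀') L' :=
    SpAux.step_down hϖ hL₀p' hL'copy hlow' hup'
  exact Relation.ReflTransGen.head stepA
    (walkpath.trans (Relation.ReflTransGen.single stepB))
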